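/- arXiv:1503.02920 — 7 statements merged into one kernel-verified Lean document; each statement's English description precedes it below -/
import Mathlib

section
/- The unique real root greater than 1 of the polynomial x^10 - 2x^5 - 2x^4 - 2, corresponding to the branching vector (10,10,6,6,5,5), is strictly less than the unique real root greater than 1 of x^3 - x - 1. -/
/-- Uniqueness of roots of `x^10 - 2x^5 - 2x^4 - 2` on `(1, ∞)`. -/
lemma uniq10 {x y : ℝ} (hx1 : 1 < x) (hy1 : 1 < y)
    (hx : x ^ 10 - 2 * x ^ 5 - 2 * x ^ 4 - 2 = 0)
    (hy : y ^ 10 - 2 * y ^ 5 - 2 * y ^ 4 - 2 = 0) : x = y := by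
  have hx0 : (0:ℝ) < x := by linarith
  have hy0 : (0:ℝ) < y := by linarith
  have key : 2*x^5*y^5*(y^5-x^5) + 2*x^4*y^4*(y^6-x^6) + 2*(y^10-x^10) = 0 := by
    linear_combination x^10 * hy - y^10 * hx
  rcases lt_trichotomy x y with h | h | h
  · exfalso
    have h5 : x^5 < y^5 := pow_lt_pow_left₀ h hx0.le (by norm_num)
    have h6 : x^6 < y^6 := pow_lt_pow_left₀ h hx0.le (by norm_num)
    have h10 : x^10 < y^10 := pow_lt_pow_left₀ h hx0.le (by norm_num)
    have t1 : 0 < 2*x^5*y^5*(y^5-x^5) :=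
      mul_pos (by positivity) (sub_pos.mpr h5)
    have t2 : 0 < 2*x^4*y^4*(y^6-x^6) :=
      mul_pos (by positivity) (sub_pos.mpr h6)
    have t3 : 0 < 2*(y^10-x^10) :=
      mul_pos (by norm_num) (sub_pos.mpr h10)
    linarith
  · exact h
  · exfalso
    have h5 : y^5 < x^5 := pow_lt_pow_left₀ h hy0.le (by norm_num)
    have h6 : y^6 < x^6 := pow_lt_pow_left₀ h hy0.le (by norm_num)
    have h10 : y^10 < x^10 := pow_lt_pow_left₀ h hy0.le (by norm_num)
    have t1 : 0 < 2*x^5*y^5*(x^5-y^5) :=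
      mul_pos (by positivity) (sub_pos.mpr h5)
    have t2 : 0 < 2*x^4*y^4*(x^6-y^6) :=
      mul_pos (by positivity) (sub_pos.mpr h6)
    have t3 : 0 < 2*(x^10-y^10) :=
      mul_pos (by norm_num) (sub_pos.mpr h10)
    linarith

/-- Uniqueness of roots of `x^3 - x - 1` on `(1, ∞)`. -/
lemma uniq3 {x y : ℝ} (hx1 : 1 < x) (hy1 : 1 < y)
    (hx : x ^ 3 - x - 1 = 0) (hy : y ^ 3 - y - 1 = 0) : x = y := by
  have key : (x - y) * (x^2 + x*y + y^2 - 1) = 0 := by linear_combination hx - hy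
  have hpos : 0 < x^2 + x*y + y^2 - 1 := by nlinarith
  have := mul_eq_zero.mp key
  rcases this with h | h
  · linarith
  · linarith

/-- The unique real root greater than 1 of `x^10 - 2x^5 - 2x^4 - 2`
(branching vector (10,10,6,6,5,5)) is strictly smaller than the unique real root
greater than 1 of `x^3 - x - 1` (branching vector (3,2)). -/
theorem branching10_10_6_6_5_5_lt_branching32 :
    ∃ ρ₁ ρ₂ : ℝ,
      (1 < ρ₁ ∧ ρ₁ ^ 10 - 2 * ρ₁ ^ 5 - 2 * ρ₁ ^ 4 - 2 = 0 ∧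
        ∀ x : ℝ, 1 < x → x ^ 10 - 2 * x ^ 5 - 2 * x ^ 4 - 2 = 0 → x = ρ₁) ∧
      (1 < ρ₂ ∧ ρ₂ ^ 3 - ρ₂ - 1 = 0 ∧
        ∀ x : ℝ, 1 < x → x ^ 3 - x - 1 = 0 → x = ρ₂) ∧
      ρ₁ < ρ₂ := by
  -- find ρ₂ by IVT on [1,2]
  have hg : Continuous fun x : ℝ => x ^ 3 - x - 1 := by continuity
  have hiv2 : (0:ℝ) ∈ Set.Icc ((1:ℝ)^3 - 1 - 1) ((2:ℝ)^3 - 2 - 1) := by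
    norm_num
  obtain ⟨ρ₂, hmem2, hρ₂⟩ :=
    intermediate_value_Icc (by norm_num : (1:ℝ) ≤ 2) hg.continuousOn hiv2
  have hρ₂ : ρ₂ ^ 3 - ρ₂ - 1 = 0 := hρ₂
  have h1ρ₂ : 1 < ρ₂ := by
    rcases lt_or_eq_of_le hmem2.1 with h | h
    · exact h
    · exfalso; rw [← h] at hρ₂; norm_num at hρ₂
  -- evaluate the degree-10 polynomial at ρ₂
  have hfρ₂ : ρ₂ ^ 10 - 2 * ρ₂ ^ 5 - 2 * ρ₂ ^ 4 - 2 = ρ₂ - 1 := by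
    linear_combination (ρ₂^7 + ρ₂^5 + ρ₂^4 + ρ₂^3 + 1) * hρ₂
  -- find ρ₁ by IVT on [1, ρ₂]
  have hf : Continuous fun x : ℝ => x ^ 10 - 2 * x ^ 5 - 2 * x ^ 4 - 2 := by
    continuity
  have hiv1 : (0:ℝ) ∈ Set.Icc ((1:ℝ)^10 - 2*(1:ℝ)^5 - 2*(1:ℝ)^4 - 2)
      (ρ₂ ^ 10 - 2 * ρ₂ ^ 5 - 2 * ρ₂ ^ 4 - 2) := by
    constructor
    · norm_num
    · rw [hfρ₂]; linarith
  obtain ⟨ρ₁, hmem1, hρ₁⟩ :=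
    intermediate_value_Icc h1ρ₂.le hf.continuousOn hiv1
  have hρ₁ : ρ₁ ^ 10 - 2 * ρ₁ ^ 5 - 2 * ρ₁ ^ 4 - 2 = 0 := hρ₁
  have h1ρ₁ : 1 < ρ₁ := by
    rcases lt_or_eq_of_le hmem1.1 with h | h
    · exact h
    · exfalso; rw [← h] at hρ₁; norm_num at hρ₁
  have hρ₁ρ₂ : ρ₁ < ρ₂ := by
    rcases lt_or_eq_of_le hmem1.2 with h | h
    · exact h
    · exfalso; rw [h, hfρ₂] at hρ₁; linarith
  exact ⟨ρ₁, ρ₂,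
    ⟨h1ρ₁, hρ₁, fun x hx hfx => uniq10 hx h1ρ₁ hfx hρ₁⟩,
    ⟨h1ρ₂, hρ₂, fun x hx hfx => uniq3 hx h1ρ₂ hfx hρ₂⟩,
    hρ₁ρ₂⟩
end

section
/- Monotonicity of branching complexity in two-branch vectors: if d_1 + d_2 = d_1' + d_2', d_1, d_2, d_1', d_2' are positive integers, and max(d_1, d_2) > max(d_1', d_2'), then the unique root greater than 1 of x^{max(d_1,d_2)} - x^{max(d_1,d_2)-d_1} - x^{max(d_1,d_2)-d_2} is strictly greater than the unique root greater than 1 of the corresponding polynomial for (d_1', d_2'). In other words, a less balanced two-way branching has strictly higher branching complexity. -/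
lemma key_ineq (t : ℝ) (ht0 : 0 < t) (ht1 : t < 1) (m M m' M' : ℕ)
    (hs : m + M = m' + M') (hM : M' < M) (hm : m' ≤ M') :
    t ^ m' + t ^ M' < t ^ m + t ^ M := by
  have hmm : m < m' := by omega
  obtain ⟨k, hk⟩ : ∃ k, m' = m + k := ⟨m' - m, by omega⟩
  have hMk : M = M' + k := by omega
  have hk0 : 0 < k := by omega
  subst hk hMk
  rw [pow_add, pow_add]
  have h1 : t ^ k < 1 := pow_lt_one₀ ht0.le ht1 hk0.ne'
  have h2 : t ^ M' < t ^ m := pow_lt_pow_right_of_lt_one₀ ht0 ht1 (by omega)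
  nlinarith [pow_pos ht0 k, pow_pos ht0 m, pow_pos ht0 M']

/-- A less balanced two-way branching has a strictly higher branching complexity:
if `d₁ + d₂ = d₁' + d₂'` and `max d₁ d₂ > max d₁' d₂'`, then the root in `(1,∞)` of
`x^{-d₁} + x^{-d₂} = 1` is strictly greater than that of `x^{-d₁'} + x^{-d₂'} = 1`. -/
theorem two_branch_balance_monotone
    (d₁ d₂ d₁' d₂' : ℕ) (h₁ : 0 < d₁) (h₂ : 0 < d₂) (h₁' : 0 < d₁') (h₂' : 0 < d₂')
    (hsum : d₁ + d₂ = d₁' + d₂') (hmax : max d₁' d₂' < max d₁ d₂)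
    (ρ ρ' : ℝ) (hρ : 1 < ρ) (hρ' : 1 < ρ')
    (hroot : (1 / ρ) ^ d₁ + (1 / ρ) ^ d₂ = 1)
    (hroot' : (1 / ρ') ^ d₁' + (1 / ρ') ^ d₂' = 1) :
    ρ' < ρ := by
  by_contra hle
  push_neg at hle
  set t : ℝ := 1 / ρ' with ht
  have ht0 : 0 < t := by positivity
  have ht1 : t < 1 := by
    rw [ht, div_lt_one (by linarith)]; linarith
  -- t^{d₁'} + t^{d₂'} < t^{d₁} + t^{d₂}
  have hkey : t ^ d₁' + t ^ d₂' < t ^ d₁ + t ^ d₂ := by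
    have h1 : t ^ d₁' + t ^ d₂' = t ^ (min d₁' d₂') + t ^ (max d₁' d₂') := by
      rcases le_total d₁' d₂' with h | h
      · rw [min_eq_left h, max_eq_right h]
      · rw [min_eq_right h, max_eq_left h]; ring
    have h2 : t ^ d₁ + t ^ d₂ = t ^ (min d₁ d₂) + t ^ (max d₁ d₂) := by
      rcases le_total d₁ d₂ with h | h
      · rw [min_eq_left h, max_eq_right h]
      · rw [min_eq_right h, max_eq_left h]; ring
    rw [h1, h2]
    exact key_ineq t ht0 ht1 _ _ _ _ (by omega) hmax (min_le_max)
  -- monotonicity: (1/ρ')^d ≤ (1/ρ)^d since 1/ρ' ≤ 1/ρ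
  have hmono : ∀ d : ℕ, t ^ d ≤ (1 / ρ) ^ d := fun d =>
    pow_le_pow_left₀ ht0.le (by
      rw [ht, div_le_div_iff₀ (by linarith) (by linarith)]; linarith) d
  have := hmono d₁
  have := hmono d₂
  linarith [hroot, hroot', hkey]
end

section
/- Randomized lower bound for simplified formulas (Lemma 5.1): let F be a CNF formula with m clauses over n variables in which there are exactly n unit clauses (one unit clause (¬x_i) for each variable x_i), and each of the remaining m - n clauses contains at least 4 positive literals (on distinct variables). Assign each variable value 1 independently with probability p = 0.1795. Then the expected number of satisfied clauses is at least n(1-p) + (m-n)(1-(1-p)^4), and if m + n/2 ≥ 1.829·k, this expectation is at least k. -/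
open Classical

/-- A clause over variables `Fin N`: a finite set of signed variables. -/
abbrev ClauseN (N : ℕ) := Finset (Fin N × Bool)

/-- A clause is satisfied by an assignment if some literal in it is true. -/
def clauseSatN {N : ℕ} (σ : Fin N → Bool) (C : ClauseN N) : Prop :=
  ∃ l ∈ C, σ l.1 = l.2

/-- Number of clauses of `G` satisfied by `σ`. -/
noncomputable def satCountN {N : ℕ} (σ : Fin N → Bool) (G : Multiset (ClauseN N)) : ℕ :=
  Multiset.card (G.filter fun C => clauseSatN σ C)

/-- Probability of the assignment `σ` when each variable is independently set to
`true` with probability `p`. -/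
noncomputable def weight (p : ℝ) {N : ℕ} (σ : Fin N → Bool) : ℝ :=
  ∏ i, if σ i then p else 1 - p

lemma rlb_prod_indicator {N : ℕ} (S : Finset (Fin N)) (σ : Fin N → Bool) :
    (∏ i ∈ S, (if σ i then (0:ℝ) else 1)) =
      if ∀ i ∈ S, σ i = false then 1 else 0 := by
  by_cases h : ∀ i ∈ S, σ i = false
  · rw [if_pos h, Finset.prod_eq_one]
    intro i hi; rw [h i hi]; simp
  · rw [if_neg h]
    push_neg at h
    obtain ⟨i, hi, hne⟩ := h
    refine Finset.prod_eq_zero hi ?_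
    simp only [ne_eq, Bool.not_eq_false] at hne
    simp [hne]

lemma sum_weight_allfalse (p : ℝ) {N : ℕ} (S : Finset (Fin N)) :
    ∑ σ : Fin N → Bool, weight p σ *
      (if ∀ i ∈ S, σ i = false then (1:ℝ) else 0) = (1 - p) ^ S.card := by
  have key : ∀ σ : Fin N → Bool,
      weight p σ * (if ∀ i ∈ S, σ i = false then (1:ℝ) else 0)
      = ∏ i, ((if σ i then p else 1 - p) *
          (if i ∈ S then (if σ i then (0:ℝ) else 1) else 1)) := by
    intro σ
    rw [Finset.prod_mul_distrib]
    congr 1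
    rw [← rlb_prod_indicator S σ,
      Finset.prod_ite_mem Finset.univ S (fun i => if σ i then (0:ℝ) else 1),
      Finset.univ_inter]
  calc ∑ σ : Fin N → Bool, weight p σ * (if ∀ i ∈ S, σ i = false then (1:ℝ) else 0)
      = ∑ σ ∈ Fintype.piFinset (fun _ : Fin N => (Finset.univ : Finset Bool)),
          ∏ i, ((if σ i then p else 1 - p) *
            (if i ∈ S then (if σ i then (0:ℝ) else 1) else 1)) := by
        rw [Fintype.piFinset_univ]
        exact Finset.sum_congr rfl fun σ _ => key σ
    _ = ∏ i, ∑ b : Bool, ((if b then p else 1 - p) *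
          (if i ∈ S then (if b then (0:ℝ) else 1) else 1)) := by
        rw [Finset.prod_univ_sum]
    _ = ∏ i, (if i ∈ S then 1 - p else 1) := by
        refine Finset.prod_congr rfl fun i _ => ?_
        by_cases h : i ∈ S <;> simp [h]
    _ = (1 - p) ^ S.card := by
        rw [Finset.prod_ite_mem, Finset.univ_inter, Finset.prod_const]

lemma sum_weight_one (p : ℝ) {N : ℕ} :
    ∑ σ : Fin N → Bool, weight p σ = 1 := by
  have := sum_weight_allfalse p (∅ : Finset (Fin N))
  simpa using this

lemma esat_eq (p : ℝ) {N : ℕ} (C : ClauseN N) (S : Finset (Fin N))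
    (h : ∀ σ : Fin N → Bool, clauseSatN σ C ↔ ¬ (∀ i ∈ S, σ i = false)) :
    ∑ σ : Fin N → Bool, weight p σ * (if clauseSatN σ C then (1:ℝ) else 0)
      = 1 - (1 - p) ^ S.card := by
  have h1 : ∀ σ : Fin N → Bool,
      weight p σ * (if clauseSatN σ C then (1:ℝ) else 0)
      = weight p σ - weight p σ * (if ∀ i ∈ S, σ i = false then (1:ℝ) else 0) := by
    intro σ
    by_cases hσ : ∀ i ∈ S, σ i = false
    · rw [if_pos hσ, if_neg (by rw [h σ]; exact not_not_intro hσ)]; ring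
    · rw [if_neg hσ, if_pos ((h σ).mpr hσ)]; ring
  rw [Finset.sum_congr rfl fun σ _ => h1 σ, Finset.sum_sub_distrib,
    sum_weight_one, sum_weight_allfalse]

lemma expect_satCount (p : ℝ) {N : ℕ} (G : Multiset (ClauseN N)) :
    ∑ σ : Fin N → Bool, weight p σ * (satCountN σ G : ℝ)
      = (G.map (fun C => ∑ σ : Fin N → Bool, weight p σ *
          (if clauseSatN σ C then (1:ℝ) else 0))).sum := by
  induction G using Multiset.induction with
  | empty => simp [satCountN]
  | cons C G ih =>
    have hc : ∀ σ : Fin N → Bool, (satCountN σ (C ::ₘ G) : ℝ)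
        = (if clauseSatN σ C then (1:ℝ) else 0) + (satCountN σ G : ℝ) := by
      intro σ
      by_cases h : clauseSatN σ C <;>
        simp [satCountN, Multiset.filter_cons, h, add_comm]
    simp only [hc, mul_add, Finset.sum_add_distrib, ih, Multiset.map_cons,
      Multiset.sum_cons]

/-- Randomized lower bound for simplified formulas (Lemma 5.1): `F` consists of
the `N` unit clauses `(¬x_i)` and of non-unit clauses each containing at least 4
positive literals (on distinct variables). Assigning each variable `true`
independently with probability `p = 0.1795`, the expected number of satisfied
clauses is at least `N(1-p) + (m-N)(1-(1-p)^4)`, and if `m + N/2 ≥ 1.829·k` this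
expectation is at least `k`. -/
theorem randomized_lower_bound (N : ℕ) (pos : Multiset (ClauseN N))
    (hpos : ∀ C ∈ pos, (∀ l ∈ C, l.2 = true) ∧ 4 ≤ C.card ∧
      (C.image Prod.fst).card = C.card)
    (F : Multiset (ClauseN N))
    (hF : F = (Finset.univ.val.map fun i : Fin N => ({(i, false)} : ClauseN N)) + pos)
    (m : ℕ) (hm : m = Multiset.card F)
    (p : ℝ) (hp : p = 0.1795) (k : ℝ) :
    (N : ℝ) * (1 - p) + ((m : ℝ) - N) * (1 - (1 - p) ^ 4) ≤
        ∑ σ : Fin N → Bool, weight p σ * (satCountN σ F : ℝ) ∧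
    (1.829 * k ≤ (m : ℝ) + (N : ℝ) / 2 →
      k ≤ ∑ σ : Fin N → Bool, weight p σ * (satCountN σ F : ℝ)) := by
  obtain ⟨E, hE⟩ : ∃ E, E = ∑ σ : Fin N → Bool, weight p σ * (satCountN σ F : ℝ) := ⟨_, rfl⟩
  obtain ⟨q, hq⟩ : ∃ q, q = 1 - (1 - p) ^ 4 := ⟨_, rfl⟩
  rw [← hE, ← hq]
  have hp0 : (0:ℝ) ≤ 1 - p := by rw [hp]; norm_num
  have hp1 : (1:ℝ) - p ≤ 1 := by rw [hp]; norm_num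
  have hq0 : 0 ≤ q := by rw [hq, hp]; norm_num
  -- expectation of a unit clause
  have hunit : ∀ i : Fin N,
      (∑ σ : Fin N → Bool, weight p σ *
        (if clauseSatN σ ({(i, false)} : ClauseN N) then (1:ℝ) else 0)) = 1 - p := by
    intro i
    have key : ∀ σ : Fin N → Bool,
        clauseSatN σ ({(i, false)} : ClauseN N) ↔ ∀ j ∈ ({i} : Finset (Fin N)), σ j = false := by
      intro σ
      simp [clauseSatN]
    have := sum_weight_allfalse p ({i} : Finset (Fin N))
    rw [Finset.card_singleton, pow_one] at this
    rw [← this]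
    refine Finset.sum_congr rfl fun σ _ => ?_
    congr 1
    exact if_congr (key σ) rfl rfl
  -- expectation of a positive clause is at least q
  have hposE : ∀ C ∈ pos,
      q ≤ ∑ σ : Fin N → Bool, weight p σ *
        (if clauseSatN σ C then (1:ℝ) else 0) := by
    intro C hC
    obtain ⟨hall, hcard, himg⟩ := hpos C hC
    have hiff : ∀ σ : Fin N → Bool,
        clauseSatN σ C ↔ ¬ (∀ i ∈ C.image Prod.fst, σ i = false) := by
      intro σ
      constructor
      · rintro ⟨l, hl, hsl⟩ hallf
        have h2 := hallf l.1 (Finset.mem_image_of_mem _ hl)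
        rw [h2, hall l hl] at hsl
        exact Bool.false_ne_true hsl
      · intro hn
        push_neg at hn
        obtain ⟨i, hi, hne⟩ := hn
        obtain ⟨l, hl, hfst⟩ := Finset.mem_image.mp hi
        refine ⟨l, hl, ?_⟩
        simp only [ne_eq, Bool.not_eq_false] at hne
        rw [hall l hl, hfst]
        exact hne
    rw [esat_eq p C _ hiff, himg, hq]
    have : (1 - p) ^ C.card ≤ (1 - p) ^ 4 :=
      pow_le_pow_of_le_one hp0 hp1 hcard
    linarith
  -- split the expectation
  have hmain : (N : ℝ) * (1 - p) + (Multiset.card pos : ℝ) * q ≤ E := by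
    rw [hE, expect_satCount, hF, Multiset.map_add, Multiset.sum_add,
      Multiset.map_map]
    have hu : (Multiset.map ((fun C => ∑ σ : Fin N → Bool, weight p σ *
        (if clauseSatN σ C then (1:ℝ) else 0)) ∘
          fun i : Fin N => ({(i, false)} : ClauseN N)) Finset.univ.val).sum
        = (N : ℝ) * (1 - p) := by
      have hfun : ((fun C => ∑ σ : Fin N → Bool, weight p σ *
          (if clauseSatN σ C then (1:ℝ) else 0)) ∘
            fun i : Fin N => ({(i, false)} : ClauseN N)) = fun _ : Fin N => 1 - p := by
        funext i; exact hunit i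
      rw [hfun, Multiset.map_const', Multiset.sum_replicate]
      simp [nsmul_eq_mul]
    rw [hu]
    have hv : (Multiset.card pos : ℝ) * q ≤
        (Multiset.map (fun C => ∑ σ : Fin N → Bool, weight p σ *
          (if clauseSatN σ C then (1:ℝ) else 0)) pos).sum := by
      have := Multiset.card_nsmul_le_sum (s := Multiset.map (fun C =>
        ∑ σ : Fin N → Bool, weight p σ *
          (if clauseSatN σ C then (1:ℝ) else 0)) pos) (a := q) ?_
      · simpa [nsmul_eq_mul] using this
      · intro x hx
        obtain ⟨C, hC, rfl⟩ := Multiset.mem_map.mp hx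
        exact hposE C hC
    linarith
  have hcardF : (m : ℝ) = (N : ℝ) + (Multiset.card pos : ℝ) := by
    rw [hm, hF]; push_cast [Multiset.card_add, Multiset.card_map]; simp
  have hmn : (m : ℝ) - N = (Multiset.card pos : ℝ) := by linarith
  constructor
  · rw [hmn]; exact hmain
  · intro hk
    have hQ1 : (1:ℝ) ≤ 1.829 * q := by rw [hq, hp]; norm_num
    have hPQ : (3/2 : ℝ) * q ≤ 1 - p := by rw [hq, hp]; norm_num
    have hposcard : (0:ℝ) ≤ (Multiset.card pos : ℝ) := Nat.cast_nonneg _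
    have hE2 : ((m : ℝ) + (N : ℝ) / 2) * q ≤ E := by
      have : ((m : ℝ) + (N : ℝ) / 2) * q ≤ (N : ℝ) * (1 - p) + (Multiset.card pos : ℝ) * q := by
        rw [hcardF]
        have hN : (0:ℝ) ≤ N := Nat.cast_nonneg _
        nlinarith
      linarith
    by_cases hk0 : 0 ≤ k
    · have : 1.829 * k * q ≤ ((m : ℝ) + (N : ℝ) / 2) * q :=
        mul_le_mul_of_nonneg_right hk hq0
      nlinarith
    · push_neg at hk0
      have hEnn : 0 ≤ E := by
        have hN : (0:ℝ) ≤ N := Nat.cast_nonneg _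
        nlinarith
      linarith
end

section
/- Safety of resolution on a 2-variable (R-Rule 3): let F be a multiset of clauses over Boolean variables, x a variable not occurring in F, and C_1, C_2 clauses not containing x or ¬x. Then the maximum number of clauses of F ∧ (x ∨ C_1) ∧ (¬x ∨ C_2) satisfiable by an assignment equals 1 plus the maximum number of clauses of F ∧ (C_1 ∨ C_2) satisfiable by an assignment. -/
open Classical

/-- Variables are natural numbers. -/
abbrev Var := ℕ

/-- A literal is a variable together with a sign (`true` = positive). -/
abbrev Lit := Var × Bool

/-- Negation of a literal. -/
def Lit.neg (l : Lit) : Lit := (l.1, !l.2)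

/-- A clause is a finite set of literals. -/
abbrev Clause := Finset Lit

/-- A literal is satisfied by an assignment. -/
def litSat (σ : Var → Bool) (l : Lit) : Prop := σ l.1 = l.2

/-- A clause is satisfied if some literal in it is satisfied. -/
def clauseSat (σ : Var → Bool) (C : Clause) : Prop := ∃ l ∈ C, litSat σ l

/-- Number of clauses of the multiset `G` satisfied by the assignment `σ`. -/
noncomputable def satCount (σ : Var → Bool) (G : Multiset Clause) : ℕ :=
  Multiset.card (G.filter fun C => clauseSat σ C)

/-- Maximum number of clauses of `G` satisfiable by an assignment. -/
noncomputable def maxsat (G : Multiset Clause) : ℕ :=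
  sSup (Set.range fun σ => satCount σ G)

/-- Number of clauses of `G` that contain the literal `l`. -/
noncomputable def occCount (l : Lit) (G : Multiset Clause) : ℕ :=
  Multiset.card (G.filter fun C => l ∈ C)

/-- The variable `v` occurs (positively or negatively) in the formula `G`. -/
def varOccurs (v : Var) (G : Multiset Clause) : Prop :=
  ∃ C ∈ G, ∃ l ∈ C, l.1 = v

lemma satCount_cons (σ : Var → Bool) (C : Clause) (G : Multiset Clause) :
    satCount σ (C ::ₘ G) = (if clauseSat σ C then 1 else 0) + satCount σ G := by
  simp [satCount, Multiset.filter_cons]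
  split <;> simp

lemma satCount_le_card (σ : Var → Bool) (G : Multiset Clause) :
    satCount σ G ≤ Multiset.card G :=
  Multiset.card_le_card (Multiset.filter_le _ _)

lemma bdd (G : Multiset Clause) : BddAbove (Set.range fun σ => satCount σ G) :=
  ⟨Multiset.card G, by rintro _ ⟨σ, rfl⟩; exact satCount_le_card σ G⟩

lemma clauseSat_update (σ : Var → Bool) (x : Var) (b : Bool) (C : Clause)
    (h : ∀ l ∈ C, l.1 ≠ x) :
    clauseSat (Function.update σ x b) C ↔ clauseSat σ C := by
  unfold clauseSat litSat
  constructor <;> rintro ⟨l, hl, hs⟩ <;> exact ⟨l, hl, by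
    rwa [Function.update_of_ne (h l hl)] at *⟩

lemma satCount_update (σ : Var → Bool) (x : Var) (b : Bool) (F : Multiset Clause)
    (hxF : ¬ varOccurs x F) :
    satCount (Function.update σ x b) F = satCount σ F := by
  unfold satCount
  congr 1
  apply Multiset.filter_congr
  intro C hC
  refine clauseSat_update σ x b C fun l hl hlx => hxF ⟨C, hC, l, hl, hlx⟩

lemma clauseSat_insert (σ : Var → Bool) (l : Lit) (C : Clause) :
    clauseSat σ (insert l C) ↔ litSat σ l ∨ clauseSat σ C := by
  simp [clauseSat, Finset.mem_insert, or_and_right, exists_or]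

lemma clauseSat_union (σ : Var → Bool) (C D : Clause) :
    clauseSat σ (C ∪ D) ↔ clauseSat σ C ∨ clauseSat σ D := by
  simp [clauseSat, Finset.mem_union, or_and_right, exists_or]

/-- Safety of resolution on a 2-variable (R-Rule 3): if the variable `x` does not
occur in `F` and occurs exactly once positively, in `(x ∨ C₁)`, and once
negatively, in `(¬x ∨ C₂)`, then
`maxsat(F ∧ (x∨C₁) ∧ (¬x∨C₂)) = 1 + maxsat(F ∧ (C₁∨C₂))`. -/
theorem rrule3_resolution_safe (F : Multiset Clause) (x : Var) (C₁ C₂ : Clause)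
    (hxF : ¬ varOccurs x F)
    (hxC₁ : ∀ l ∈ C₁, l.1 ≠ x) (hxC₂ : ∀ l ∈ C₂, l.1 ≠ x) :
    maxsat (insert (x, true) C₁ ::ₘ insert (x, false) C₂ ::ₘ F) =
      1 + maxsat ((C₁ ∪ C₂) ::ₘ F) := by
  apply le_antisymm
  · apply csSup_le (Set.range_nonempty _)
    rintro _ ⟨σ, rfl⟩
    have key : satCount σ (insert (x, true) C₁ ::ₘ insert (x, false) C₂ ::ₘ F)
        ≤ 1 + satCount σ ((C₁ ∪ C₂) ::ₘ F) := by
      rw [satCount_cons, satCount_cons, satCount_cons]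
      have hA := clauseSat_insert σ (x, true) C₁
      have hB := clauseSat_insert σ (x, false) C₂
      have hU := clauseSat_union σ C₁ C₂
      have hlit : ¬ (litSat σ (x, true) ∧ litSat σ (x, false)) := by
        unfold litSat; simp
      by_cases h1 : clauseSat σ C₁ <;> by_cases h2 : clauseSat σ C₂ <;>
        by_cases hx : litSat σ (x, true) <;>
        simp_all [litSat] <;> omega
    calc satCount σ _ ≤ 1 + satCount σ ((C₁ ∪ C₂) ::ₘ F) := key
      _ ≤ 1 + maxsat ((C₁ ∪ C₂) ::ₘ F) := by
          exact Nat.add_le_add_left (le_csSup (bdd _) ⟨σ, rfl⟩) 1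
  · have hmem : maxsat ((C₁ ∪ C₂) ::ₘ F) ∈
        Set.range fun σ => satCount σ ((C₁ ∪ C₂) ::ₘ F) :=
      Nat.sSup_mem (Set.range_nonempty _) (bdd _)
    obtain ⟨σ, hσ⟩ := hmem
    set b : Bool := if clauseSat σ C₁ then false else true with hb
    set σ' := Function.update σ x b with hσ'
    have hx' : σ' x = b := by simp [hσ']
    have hF : satCount σ' F = satCount σ F := satCount_update σ x b F hxF
    have h1 : clauseSat σ' C₁ ↔ clauseSat σ C₁ := clauseSat_update σ x b C₁ hxC₁
    have h2 : clauseSat σ' C₂ ↔ clauseSat σ C₂ := clauseSat_update σ x b C₂ hxC₂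
    have key : 1 + satCount σ ((C₁ ∪ C₂) ::ₘ F)
        ≤ satCount σ' (insert (x, true) C₁ ::ₘ insert (x, false) C₂ ::ₘ F) := by
      rw [satCount_cons, satCount_cons, satCount_cons, hF]
      rw [clauseSat_insert, clauseSat_insert, clauseSat_union, h1, h2]
      have hlt : litSat σ' (x, true) ↔ b = true := by
        unfold litSat; simp [hx']
      have hlf : litSat σ' (x, false) ↔ b = false := by
        unfold litSat; simp [hx']
      by_cases hc1 : clauseSat σ C₁ <;> by_cases hc2 : clauseSat σ C₂ <;>
        simp_all <;> omega
    rw [← hσ]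
    exact key.trans (le_csSup (bdd _) ⟨σ', rfl⟩)
end

section
/- Safety of R-Rule 7 (resolution on a (2,2)-variable whose neighbors are (i,1)-literals): let F_1 = F ∧ (z∨y_1∨C_1) ∧ (z∨y_2∨C_2) ∧ (¬z∨y_3∨C_3) ∧ (¬z∨y_4∨C_4), where z occurs exactly twice positively and twice negatively (only in the displayed clauses), each literal y_h (h = 1,2,3,4) has its negation ¬y_h occurring exactly once in F_1, no y_h equals z or ¬z, y_2 ≠ ¬y_1, and no C_h contains z or ¬z. Then maxsat(F_1) = maxsat(F ∧ (y_1∨y_3∨C_1∨C_3) ∧ (y_2∨y_3∨C_2∨C_3) ∧ (y_1∨y_4∨C_1∨C_4) ∧ (y_2∨y_4∨C_2∨C_4)). -/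
open Classical

namespace RR7

def force (l : Lit) (σ : Var → Bool) : Var → Bool := fun v => if v = l.1 then l.2 else σ v

lemma neg_neg (l : Lit) : l.neg.neg = l := by simp [Lit.neg]

lemma neg_ne_swap {p q : Lit} (h : q ≠ p.neg) : p ≠ q.neg := by
  intro hh; apply h; rw [hh, neg_neg]

lemma litSat_force_self (l : Lit) (σ) : litSat (force l σ) l := by simp [litSat, force]

lemma litSat_force_of_ne {m l : Lit} (h : m.1 ≠ l.1) (σ) :
    litSat (force l σ) m ↔ litSat σ m := by simp [litSat, force, h]

lemma eq_or_eq_neg_of_fst {m l : Lit} (h : m.1 = l.1) : m = l ∨ m = l.neg := by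
  rcases m with ⟨v, b⟩; rcases l with ⟨w, c⟩
  simp [Lit.neg] at *
  subst h
  cases b <;> cases c <;> simp

lemma not_litSat_neg {σ} {l : Lit} (h : litSat σ l) : ¬ litSat σ l.neg := by
  simp [litSat, Lit.neg] at *; simp [h]

lemma litSat_force2_left {p q : Lit} (h : q ≠ p.neg) (σ) : litSat (force q (force p σ)) p := by
  by_cases hv : p.1 = q.1
  · rcases eq_or_eq_neg_of_fst hv with h1 | h1
    · rw [h1]; exact litSat_force_self _ _
    · exact absurd h1 (neg_ne_swap h)
  · rw [litSat_force_of_ne hv]; exact litSat_force_self _ _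


lemma clauseSat_insert (σ) (l : Lit) (C : Clause) :
    clauseSat σ (insert l C) ↔ litSat σ l ∨ clauseSat σ C := by
  simp [clauseSat, Finset.mem_insert, or_and_right, exists_or]

lemma clauseSat_union (σ) (C D : Clause) :
    clauseSat σ (C ∪ D) ↔ clauseSat σ C ∨ clauseSat σ D := by
  simp [clauseSat, Finset.mem_union, or_and_right, exists_or]

lemma clauseSat_of_mem {σ} {l : Lit} {C : Clause} (h : l ∈ C) (hs : litSat σ l) :
    clauseSat σ C := ⟨l, h, hs⟩

lemma clauseSat_mono {σ} {C D : Clause} (h : C ⊆ D) (hs : clauseSat σ C) : clauseSat σ D := by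
  obtain ⟨l, hl, hsl⟩ := hs; exact ⟨l, h hl, hsl⟩

lemma clauseSat_preserve {σ τ} {C : Clause} (h : ∀ m ∈ C, litSat σ m → litSat τ m)
    (hs : clauseSat σ C) : clauseSat τ C := by
  obtain ⟨l, hl, hsl⟩ := hs; exact ⟨l, hl, h l hl hsl⟩

lemma satCount_cons (σ) (X : Clause) (G : Multiset Clause) :
    satCount σ (X ::ₘ G) = (if clauseSat σ X then 1 else 0) + satCount σ G := by
  simp only [satCount, Multiset.filter_cons]
  split_ifs <;> simp [Nat.add_comm]

lemma occCount_cons (l : Lit) (X : Clause) (G : Multiset Clause) :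
    occCount l (X ::ₘ G) = (if l ∈ X then 1 else 0) + occCount l G := by
  simp only [occCount, Multiset.filter_cons]
  split_ifs <;> simp [Nat.add_comm]

lemma satCount_le_card (σ) (G : Multiset Clause) : satCount σ G ≤ Multiset.card G :=
  Multiset.card_le_card (Multiset.filter_le _ _)

lemma satCount_le_loss (σ τ : Var → Bool) (l₁ l₂ : Lit) (G : Multiset Clause)
    (h : ∀ m : Lit, litSat σ m → ¬ litSat τ m → m = l₁ ∨ m = l₂) :
    satCount σ G ≤ satCount τ G + occCount l₁ G + occCount l₂ G := by
  have key : ∀ C : Clause, clauseSat σ C → clauseSat τ C ∨ l₁ ∈ C ∨ l₂ ∈ C := by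
    intro C hC
    obtain ⟨m, hm, hs⟩ := hC
    by_cases ht : litSat τ m
    · exact Or.inl ⟨m, hm, ht⟩
    · rcases h m hs ht with rfl | rfl
      · exact Or.inr (Or.inl hm)
      · exact Or.inr (Or.inr hm)
  induction G using Multiset.induction with
  | empty => simp [satCount, occCount]
  | cons a s ih =>
    rw [satCount_cons, satCount_cons, occCount_cons, occCount_cons]
    have k := key a
    split_ifs <;> first | omega | (exfalso; tauto)

lemma satCount_le_loss1 (σ τ : Var → Bool) (l₁ : Lit) (G : Multiset Clause)
    (h : ∀ m : Lit, litSat σ m → ¬ litSat τ m → m = l₁) :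
    satCount σ G ≤ satCount τ G + occCount l₁ G := by
  have key : ∀ C : Clause, clauseSat σ C → clauseSat τ C ∨ l₁ ∈ C := by
    intro C hC
    obtain ⟨m, hm, hs⟩ := hC
    by_cases ht : litSat τ m
    · exact Or.inl ⟨m, hm, ht⟩
    · exact Or.inr ((h m hs ht) ▸ hm)
  induction G using Multiset.induction with
  | empty => simp [satCount, occCount]
  | cons a s ih =>
    rw [satCount_cons, satCount_cons, occCount_cons]
    have k := key a
    split_ifs <;> first | omega | (exfalso; tauto)

lemma satCount_congr (σ τ) (G : Multiset Clause)
    (h : ∀ C ∈ G, clauseSat σ C ↔ clauseSat τ C) : satCount σ G = satCount τ G := by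
  unfold satCount
  rw [Multiset.filter_congr h]

lemma maxsat_le_of (G H : Multiset Clause)
    (h : ∀ σ, ∃ τ, satCount σ G ≤ satCount τ H) : maxsat G ≤ maxsat H := by
  unfold maxsat
  apply csSup_le (Set.range_nonempty _)
  rintro n ⟨σ, rfl⟩
  obtain ⟨τ, hτ⟩ := h σ
  refine le_trans hτ (le_csSup ⟨Multiset.card H, ?_⟩ ⟨τ, rfl⟩)
  rintro m ⟨ρ, rfl⟩
  exact satCount_le_card ρ H

lemma cons4_swap (a b c d : Clause) (s : Multiset Clause) :
    a ::ₘ b ::ₘ c ::ₘ d ::ₘ s = c ::ₘ d ::ₘ a ::ₘ b ::ₘ s := by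
  rw [Multiset.cons_swap b c, Multiset.cons_swap a c, Multiset.cons_swap b d, Multiset.cons_swap a d]

lemma cons_mid_swap (a b c d : Clause) (s : Multiset Clause) :
    a ::ₘ b ::ₘ c ::ₘ d ::ₘ s = a ::ₘ c ::ₘ b ::ₘ d ::ₘ s := by
  rw [Multiset.cons_swap b c]

lemma cons_34_swap (a b c d : Clause) (s : Multiset Clause) :
    a ::ₘ b ::ₘ c ::ₘ d ::ₘ s = a ::ₘ b ::ₘ d ::ₘ c ::ₘ s := by
  rw [Multiset.cons_swap c d]


lemma force1_loss {q : Lit} (σ) (m : Lit) (hσ : litSat σ m) (hτ : ¬ litSat (force q σ) m) :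
    m = q.neg := by
  by_cases h1 : m.1 = q.1
  · rcases eq_or_eq_neg_of_fst h1 with rfl | rfl
    · exact absurd (litSat_force_self _ _) hτ
    · rfl
  · exact absurd ((litSat_force_of_ne h1 σ).mpr hσ) hτ

lemma force2_loss {p q : Lit} (hpq : q ≠ p.neg) (σ) (m : Lit) (hσ : litSat σ m)
    (hτ : ¬ litSat (force q (force p σ)) m) : m = p.neg ∨ m = q.neg := by
  by_cases h1 : m.1 = q.1
  · rcases eq_or_eq_neg_of_fst h1 with rfl | rfl
    · exact absurd (litSat_force_self _ _) hτ
    · exact Or.inr rfl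
  · by_cases h2 : m.1 = p.1
    · rcases eq_or_eq_neg_of_fst h2 with rfl | rfl
      · exact absurd (litSat_force2_left hpq σ) hτ
      · exact Or.inl rfl
    · exact absurd ((litSat_force_of_ne h1 _).mpr ((litSat_force_of_ne h2 σ).mpr hσ)) hτ

lemma clauseSat_force_of_fresh {σ} {l : Lit} {C : Clause} (h : ∀ m ∈ C, m.1 ≠ l.1) :
    clauseSat (force l σ) C ↔ clauseSat σ C := by
  constructor <;> (rintro ⟨m, hm, hs⟩; exact ⟨m, hm, by rw [litSat_force_of_ne (h m hm)] at *; exact hs⟩)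

lemma satCount_force_of_fresh {σ} {l : Lit} {G : Multiset Clause}
    (h : ∀ C ∈ G, ∀ m ∈ C, m.1 ≠ l.1) : satCount (force l σ) G = satCount σ G := by
  apply satCount_congr
  intro C hC
  exact clauseSat_force_of_fresh (h C hC)

lemma lemA (F : Multiset Clause) (z y₁ y₂ y₃ y₄ : Lit) (C₁ C₂ C₃ C₄ : Clause)
    (hy43 : y₄ ≠ y₃.neg)
    (o3 : occCount y₃.neg F ≤ 1) (o4 : occCount y₄.neg F ≤ 1)
    (o34 : y₄.neg ∈ insert y₃ C₃ → occCount y₄.neg F = 0)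
    (σ : Var → Bool) (hz : litSat σ z)
    (hc : clauseSat σ (insert y₃ C₃)) (hd : ¬ clauseSat σ (insert y₄ C₄)) :
    ∃ τ, satCount σ (insert z (insert y₁ C₁) ::ₘ insert z (insert y₂ C₂) ::ₘ
        insert z.neg (insert y₃ C₃) ::ₘ insert z.neg (insert y₄ C₄) ::ₘ F) ≤
      satCount τ ((insert y₁ C₁ ∪ insert y₃ C₃) ::ₘ (insert y₂ C₂ ∪ insert y₃ C₃) ::ₘ
        (insert y₁ C₁ ∪ insert y₄ C₄) ::ₘ (insert y₂ C₂ ∪ insert y₄ C₄) ::ₘ F) := by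
  have hzneg : ¬ litSat σ z.neg := not_litSat_neg hz
  have hL : satCount σ (insert z (insert y₁ C₁) ::ₘ insert z (insert y₂ C₂) ::ₘ
      insert z.neg (insert y₃ C₃) ::ₘ insert z.neg (insert y₄ C₄) ::ₘ F) = 3 + satCount σ F := by
    rw [satCount_cons, satCount_cons, satCount_cons, satCount_cons,
      if_pos (clauseSat_of_mem (Finset.mem_insert_self _ _) hz),
      if_pos (clauseSat_of_mem (Finset.mem_insert_self _ _) hz),
      if_pos ((clauseSat_insert _ _ _).mpr (Or.inr hc)),
      if_neg (by rw [clauseSat_insert]; tauto)]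
    omega
  by_cases hm : y₄.neg ∈ insert y₃ C₃
  · refine ⟨force y₄ (force y₃ σ), ?_⟩
    set τ := force y₄ (force y₃ σ) with hτ
    have hy3 : litSat τ y₃ := litSat_force2_left hy43 σ
    have hy4 : litSat τ y₄ := litSat_force_self _ _
    have hR : satCount τ ((insert y₁ C₁ ∪ insert y₃ C₃) ::ₘ (insert y₂ C₂ ∪ insert y₃ C₃) ::ₘ
        (insert y₁ C₁ ∪ insert y₄ C₄) ::ₘ (insert y₂ C₂ ∪ insert y₄ C₄) ::ₘ F) =
        4 + satCount τ F := by
      rw [satCount_cons, satCount_cons, satCount_cons, satCount_cons,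
        if_pos (clauseSat_of_mem (Finset.mem_union_right _ (Finset.mem_insert_self _ _)) hy3),
        if_pos (clauseSat_of_mem (Finset.mem_union_right _ (Finset.mem_insert_self _ _)) hy3),
        if_pos (clauseSat_of_mem (Finset.mem_union_right _ (Finset.mem_insert_self _ _)) hy4),
        if_pos (clauseSat_of_mem (Finset.mem_union_right _ (Finset.mem_insert_self _ _)) hy4)]
      omega
    have hloss : satCount σ F ≤ satCount τ F + occCount y₃.neg F + occCount y₄.neg F :=
      satCount_le_loss σ τ _ _ F (force2_loss hy43 σ)
    have h0 : occCount y₄.neg F = 0 := o34 hm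
    omega
  · refine ⟨force y₄ σ, ?_⟩
    set τ := force y₄ σ with hτ
    have hy4 : litSat τ y₄ := litSat_force_self _ _
    have hc' : clauseSat τ (insert y₃ C₃) := by
      refine clauseSat_preserve (fun m hmem hs => ?_) hc
      by_cases h : m.1 = y₄.1
      · rcases eq_or_eq_neg_of_fst h with rfl | rfl
        · exact hy4
        · exact absurd hmem hm
      · exact (litSat_force_of_ne h σ).mpr hs
    have hR : satCount τ ((insert y₁ C₁ ∪ insert y₃ C₃) ::ₘ (insert y₂ C₂ ∪ insert y₃ C₃) ::ₘ
        (insert y₁ C₁ ∪ insert y₄ C₄) ::ₘ (insert y₂ C₂ ∪ insert y₄ C₄) ::ₘ F) =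
        4 + satCount τ F := by
      rw [satCount_cons, satCount_cons, satCount_cons, satCount_cons,
        if_pos (clauseSat_mono Finset.subset_union_right hc'),
        if_pos (clauseSat_mono Finset.subset_union_right hc'),
        if_pos (clauseSat_of_mem (Finset.mem_union_right _ (Finset.mem_insert_self _ _)) hy4),
        if_pos (clauseSat_of_mem (Finset.mem_union_right _ (Finset.mem_insert_self _ _)) hy4)]
      omega
    have hloss : satCount σ F ≤ satCount τ F + occCount y₄.neg F :=
      satCount_le_loss1 σ τ _ F (force1_loss σ)
    omega

lemma main_side (F : Multiset Clause) (z y₁ y₂ y₃ y₄ : Lit) (C₁ C₂ C₃ C₄ : Clause)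
    (hy21 : y₂ ≠ y₁.neg) (hy43 : y₄ ≠ y₃.neg)
    (o1 : occCount y₁.neg F ≤ 1) (o2 : occCount y₂.neg F ≤ 1)
    (o3 : occCount y₃.neg F ≤ 1) (o4 : occCount y₄.neg F ≤ 1)
    (o34 : y₄.neg ∈ insert y₃ C₃ → occCount y₄.neg F = 0)
    (o43 : y₃.neg ∈ insert y₄ C₄ → occCount y₃.neg F = 0)
    (σ : Var → Bool) (hz : litSat σ z) :
    ∃ τ, satCount σ (insert z (insert y₁ C₁) ::ₘ insert z (insert y₂ C₂) ::ₘ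
        insert z.neg (insert y₃ C₃) ::ₘ insert z.neg (insert y₄ C₄) ::ₘ F) ≤
      satCount τ ((insert y₁ C₁ ∪ insert y₃ C₃) ::ₘ (insert y₂ C₂ ∪ insert y₃ C₃) ::ₘ
        (insert y₁ C₁ ∪ insert y₄ C₄) ::ₘ (insert y₂ C₂ ∪ insert y₄ C₄) ::ₘ F) := by
  have hzneg : ¬ litSat σ z.neg := not_litSat_neg hz
  by_cases hc : clauseSat σ (insert y₃ C₃) <;> by_cases hd : clauseSat σ (insert y₄ C₄)
  · -- both satisfied: keep σ
    refine ⟨σ, ?_⟩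
    rw [satCount_cons, satCount_cons, satCount_cons, satCount_cons,
      satCount_cons, satCount_cons, satCount_cons, satCount_cons,
      if_pos (clauseSat_mono Finset.subset_union_right hc),
      if_pos (clauseSat_mono Finset.subset_union_right hc),
      if_pos (clauseSat_mono Finset.subset_union_right hd),
      if_pos (clauseSat_mono Finset.subset_union_right hd)]
    have b1 : (if clauseSat σ (insert z (insert y₁ C₁)) then 1 else 0) ≤ 1 := by split_ifs <;> omega
    have b2 : (if clauseSat σ (insert z (insert y₂ C₂)) then 1 else 0) ≤ 1 := by split_ifs <;> omega
    have b3 : (if clauseSat σ (insert z.neg (insert y₃ C₃)) then 1 else 0) ≤ 1 := by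
      split_ifs <;> omega
    have b4 : (if clauseSat σ (insert z.neg (insert y₄ C₄)) then 1 else 0) ≤ 1 := by
      split_ifs <;> omega
    omega
  · -- c, ¬d
    exact lemA F z y₁ y₂ y₃ y₄ C₁ C₂ C₃ C₄ hy43 o3 o4 o34 σ hz hc hd
  · -- ¬c, d : apply lemA with 3↔4 swapped
    obtain ⟨τ, hτ⟩ := lemA F z y₁ y₂ y₄ y₃ C₁ C₂ C₄ C₃ (neg_ne_swap hy43)
      o4 o3 o43 σ hz hd hc
    refine ⟨τ, ?_⟩
    rw [cons_34_swap (insert z (insert y₁ C₁)) (insert z (insert y₂ C₂))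
        (insert z.neg (insert y₃ C₃)) (insert z.neg (insert y₄ C₄)) F,
      cons4_swap (insert y₁ C₁ ∪ insert y₃ C₃) (insert y₂ C₂ ∪ insert y₃ C₃)
        (insert y₁ C₁ ∪ insert y₄ C₄) (insert y₂ C₂ ∪ insert y₄ C₄) F]
    exact hτ
  · -- ¬c, ¬d : force y₁ and y₂
    refine ⟨force y₂ (force y₁ σ), ?_⟩
    set τ := force y₂ (force y₁ σ) with hτ
    have hy1 : litSat τ y₁ := litSat_force2_left hy21 σ
    have hy2 : litSat τ y₂ := litSat_force_self _ _
    have hL : satCount σ (insert z (insert y₁ C₁) ::ₘ insert z (insert y₂ C₂) ::ₘ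
        insert z.neg (insert y₃ C₃) ::ₘ insert z.neg (insert y₄ C₄) ::ₘ F) =
        2 + satCount σ F := by
      rw [satCount_cons, satCount_cons, satCount_cons, satCount_cons,
        if_pos (clauseSat_of_mem (Finset.mem_insert_self _ _) hz),
        if_pos (clauseSat_of_mem (Finset.mem_insert_self _ _) hz),
        if_neg (by rw [clauseSat_insert]; tauto),
        if_neg (by rw [clauseSat_insert]; tauto)]
      omega
    have hR : satCount τ ((insert y₁ C₁ ∪ insert y₃ C₃) ::ₘ (insert y₂ C₂ ∪ insert y₃ C₃) ::ₘ
        (insert y₁ C₁ ∪ insert y₄ C₄) ::ₘ (insert y₂ C₂ ∪ insert y₄ C₄) ::ₘ F) =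
        4 + satCount τ F := by
      rw [satCount_cons, satCount_cons, satCount_cons, satCount_cons,
        if_pos (clauseSat_of_mem (Finset.mem_union_left _ (Finset.mem_insert_self _ _)) hy1),
        if_pos (clauseSat_of_mem (Finset.mem_union_left _ (Finset.mem_insert_self _ _)) hy2),
        if_pos (clauseSat_of_mem (Finset.mem_union_left _ (Finset.mem_insert_self _ _)) hy1),
        if_pos (clauseSat_of_mem (Finset.mem_union_left _ (Finset.mem_insert_self _ _)) hy2)]
      omega
    have hloss : satCount σ F ≤ satCount τ F + occCount y₁.neg F + occCount y₂.neg F :=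
      satCount_le_loss σ τ _ _ F (force2_loss hy21 σ)
    omega

lemma dir1 (F : Multiset Clause) (z y₁ y₂ y₃ y₄ : Lit) (C₁ C₂ C₃ C₄ : Clause)
    (hzF : ¬ varOccurs z.1 F)
    (hzC : ∀ l ∈ C₁ ∪ C₂ ∪ C₃ ∪ C₄, l.1 ≠ z.1)
    (hyz : y₁.1 ≠ z.1 ∧ y₂.1 ≠ z.1 ∧ y₃.1 ≠ z.1 ∧ y₄.1 ≠ z.1)
    (σ : Var → Bool) :
    ∃ τ, satCount σ ((insert y₁ C₁ ∪ insert y₃ C₃) ::ₘ (insert y₂ C₂ ∪ insert y₃ C₃) ::ₘ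
        (insert y₁ C₁ ∪ insert y₄ C₄) ::ₘ (insert y₂ C₂ ∪ insert y₄ C₄) ::ₘ F) ≤
      satCount τ (insert z (insert y₁ C₁) ::ₘ insert z (insert y₂ C₂) ::ₘ
        insert z.neg (insert y₃ C₃) ::ₘ insert z.neg (insert y₄ C₄) ::ₘ F) := by
  have hA1 : ∀ m ∈ insert y₁ C₁, m.1 ≠ z.1 := by
    intro m hm
    rcases Finset.mem_insert.mp hm with rfl | h
    · exact hyz.1
    · exact hzC m (by simp [Finset.mem_union, h])
  have hA2 : ∀ m ∈ insert y₂ C₂, m.1 ≠ z.1 := by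
    intro m hm
    rcases Finset.mem_insert.mp hm with rfl | h
    · exact hyz.2.1
    · exact hzC m (by simp [Finset.mem_union, h])
  have hA3 : ∀ m ∈ insert y₃ C₃, m.1 ≠ z.1 := by
    intro m hm
    rcases Finset.mem_insert.mp hm with rfl | h
    · exact hyz.2.2.1
    · exact hzC m (by simp [Finset.mem_union, h])
  have hA4 : ∀ m ∈ insert y₄ C₄, m.1 ≠ z.1 := by
    intro m hm
    rcases Finset.mem_insert.mp hm with rfl | h
    · exact hyz.2.2.2
    · exact hzC m (by simp [Finset.mem_union, h])
  have hF : ∀ C ∈ F, ∀ m ∈ C, m.1 ≠ z.1 := by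
    intro C hC m hm
    intro hv
    exact hzF ⟨C, hC, m, hm, hv⟩
  by_cases ha : clauseSat σ (insert y₁ C₁)
  · by_cases hb : clauseSat σ (insert y₂ C₂)
    · -- a ∧ b : force ¬z
      refine ⟨force z.neg σ, ?_⟩
      set τ := force z.neg σ with hτ
      have hnz : ¬ litSat τ z := by simp [litSat, force, Lit.neg, hτ]
      have hS : satCount τ F = satCount σ F := satCount_force_of_fresh hF
      have s1 : clauseSat τ (insert z (insert y₁ C₁)) :=
        clauseSat_mono (Finset.subset_insert _ _) ((clauseSat_force_of_fresh (l := z.neg) hA1).mpr ha)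
      have s2 : clauseSat τ (insert z (insert y₂ C₂)) :=
        clauseSat_mono (Finset.subset_insert _ _) ((clauseSat_force_of_fresh (l := z.neg) hA2).mpr hb)
      have s3 : clauseSat τ (insert z.neg (insert y₃ C₃)) :=
        clauseSat_of_mem (Finset.mem_insert_self _ _) (litSat_force_self _ _)
      have s4 : clauseSat τ (insert z.neg (insert y₄ C₄)) :=
        clauseSat_of_mem (Finset.mem_insert_self _ _) (litSat_force_self _ _)
      rw [satCount_cons, satCount_cons, satCount_cons, satCount_cons,
        satCount_cons, satCount_cons, satCount_cons, satCount_cons,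
        if_pos s1, if_pos s2, if_pos s3, if_pos s4, hS]
      split_ifs <;> omega
    · -- ¬b : force z
      refine ⟨force z σ, ?_⟩
      set τ := force z σ with hτ
      have hnz : ¬ litSat τ z.neg := by simp [litSat, force, Lit.neg, hτ]
      have hS : satCount τ F = satCount σ F := satCount_force_of_fresh hF
      have s1 : clauseSat τ (insert z (insert y₁ C₁)) :=
        clauseSat_of_mem (Finset.mem_insert_self _ _) (litSat_force_self _ _)
      have s2 : clauseSat τ (insert z (insert y₂ C₂)) :=
        clauseSat_of_mem (Finset.mem_insert_self _ _) (litSat_force_self _ _)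
      have e3 : clauseSat τ (insert z.neg (insert y₃ C₃)) ↔ clauseSat σ (insert y₃ C₃) := by
        rw [clauseSat_insert, clauseSat_force_of_fresh hA3]
        tauto
      have e4 : clauseSat τ (insert z.neg (insert y₄ C₄)) ↔ clauseSat σ (insert y₄ C₄) := by
        rw [clauseSat_insert, clauseSat_force_of_fresh hA4]
        tauto
      have eL1 : clauseSat σ (insert y₂ C₂ ∪ insert y₃ C₃) ↔ clauseSat σ (insert y₃ C₃) := by
        rw [clauseSat_union]; tauto
      have eL2 : clauseSat σ (insert y₂ C₂ ∪ insert y₄ C₄) ↔ clauseSat σ (insert y₄ C₄) := by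
        rw [clauseSat_union]; tauto
      rw [satCount_cons, satCount_cons, satCount_cons, satCount_cons,
        satCount_cons, satCount_cons, satCount_cons, satCount_cons,
        if_pos s1, if_pos s2, hS]
      simp only [e3, e4, eL1, eL2]
      split_ifs <;> omega
  · -- ¬a : force z
    refine ⟨force z σ, ?_⟩
    set τ := force z σ with hτ
    have hnz : ¬ litSat τ z.neg := by simp [litSat, force, Lit.neg, hτ]
    have hS : satCount τ F = satCount σ F := satCount_force_of_fresh hF
    have s1 : clauseSat τ (insert z (insert y₁ C₁)) :=
      clauseSat_of_mem (Finset.mem_insert_self _ _) (litSat_force_self _ _)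
    have s2 : clauseSat τ (insert z (insert y₂ C₂)) :=
      clauseSat_of_mem (Finset.mem_insert_self _ _) (litSat_force_self _ _)
    have e3 : clauseSat τ (insert z.neg (insert y₃ C₃)) ↔ clauseSat σ (insert y₃ C₃) := by
      rw [clauseSat_insert, clauseSat_force_of_fresh hA3]
      tauto
    have e4 : clauseSat τ (insert z.neg (insert y₄ C₄)) ↔ clauseSat σ (insert y₄ C₄) := by
      rw [clauseSat_insert, clauseSat_force_of_fresh hA4]
      tauto
    have eL1 : clauseSat σ (insert y₁ C₁ ∪ insert y₃ C₃) ↔ clauseSat σ (insert y₃ C₃) := by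
      rw [clauseSat_union]; tauto
    have eL2 : clauseSat σ (insert y₁ C₁ ∪ insert y₄ C₄) ↔ clauseSat σ (insert y₄ C₄) := by
      rw [clauseSat_union]; tauto
    rw [satCount_cons, satCount_cons, satCount_cons, satCount_cons,
      satCount_cons, satCount_cons, satCount_cons, satCount_cons,
      if_pos s1, if_pos s2, hS]
    simp only [e3, e4, eL1, eL2]
    split_ifs <;> omega

end RR7

open RR7 in
/-- Safety of R-Rule 7 (resolution on a `(2,2)`-variable whose neighbors are
`(i,1)`-literals): with
`F₁ = F ∧ (z∨y₁∨C₁) ∧ (z∨y₂∨C₂) ∧ (¬z∨y₃∨C₃) ∧ (¬z∨y₄∨C₄)`, where the variable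
of `z` occurs only in the displayed clauses, each `¬y_h` occurs exactly once in
`F₁`, `y₂ ≠ ¬y₁` and `y₄ ≠ ¬y₃`, we have
`maxsat F₁ = maxsat(F ∧ (y₁∨y₃∨C₁∨C₃) ∧ (y₂∨y₃∨C₂∨C₃) ∧ (y₁∨y₄∨C₁∨C₄) ∧ (y₂∨y₄∨C₂∨C₄))`. -/
theorem rrule7_resolution_safe (F : Multiset Clause) (z y₁ y₂ y₃ y₄ : Lit)
    (C₁ C₂ C₃ C₄ : Clause)
    (hzF : ¬ varOccurs z.1 F)
    (hzC : ∀ l ∈ C₁ ∪ C₂ ∪ C₃ ∪ C₄, l.1 ≠ z.1)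
    (hyz : y₁.1 ≠ z.1 ∧ y₂.1 ≠ z.1 ∧ y₃.1 ≠ z.1 ∧ y₄.1 ≠ z.1)
    (hy21 : y₂ ≠ y₁.neg) (hy43 : y₄ ≠ y₃.neg)
    (F₁ : Multiset Clause)
    (hF₁ : F₁ = insert z (insert y₁ C₁) ::ₘ insert z (insert y₂ C₂) ::ₘ
        insert z.neg (insert y₃ C₃) ::ₘ insert z.neg (insert y₄ C₄) ::ₘ F)
    (hynegOnce : occCount y₁.neg F₁ = 1 ∧ occCount y₂.neg F₁ = 1 ∧
        occCount y₃.neg F₁ = 1 ∧ occCount y₄.neg F₁ = 1) :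
    maxsat F₁ =
      maxsat (insert y₁ (insert y₃ (C₁ ∪ C₃)) ::ₘ insert y₂ (insert y₃ (C₂ ∪ C₃)) ::ₘ
        insert y₁ (insert y₄ (C₁ ∪ C₄)) ::ₘ insert y₂ (insert y₄ (C₂ ∪ C₄)) ::ₘ F) := by
  -- occurrence expansion
  have exp : ∀ l : Lit, occCount l F₁ =
      (if l ∈ insert z (insert y₁ C₁) then 1 else 0) +
      ((if l ∈ insert z (insert y₂ C₂) then 1 else 0) +
      ((if l ∈ insert z.neg (insert y₃ C₃) then 1 else 0) +
      ((if l ∈ insert z.neg (insert y₄ C₄) then 1 else 0) + occCount l F))) := by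
    intro l
    rw [hF₁, occCount_cons, occCount_cons, occCount_cons, occCount_cons]
  have o1 : occCount y₁.neg F ≤ 1 := by
    have h := hynegOnce.1; rw [exp y₁.neg] at h; split_ifs at h <;> omega
  have o2 : occCount y₂.neg F ≤ 1 := by
    have h := hynegOnce.2.1; rw [exp y₂.neg] at h; split_ifs at h <;> omega
  have o3 : occCount y₃.neg F ≤ 1 := by
    have h := hynegOnce.2.2.1; rw [exp y₃.neg] at h; split_ifs at h <;> omega
  have o4 : occCount y₄.neg F ≤ 1 := by
    have h := hynegOnce.2.2.2; rw [exp y₄.neg] at h; split_ifs at h <;> omega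
  have o34 : y₄.neg ∈ insert y₃ C₃ → occCount y₄.neg F = 0 := by
    intro hm
    have h := hynegOnce.2.2.2; rw [exp y₄.neg] at h
    rw [if_pos (Finset.mem_insert_of_mem hm)] at h
    split_ifs at h <;> omega
  have o43 : y₃.neg ∈ insert y₄ C₄ → occCount y₃.neg F = 0 := by
    intro hm
    have h := hynegOnce.2.2.1; rw [exp y₃.neg] at h
    rw [if_pos (Finset.mem_insert_of_mem hm)] at h
    split_ifs at h <;> omega
  have o12 : y₂.neg ∈ insert y₁ C₁ → occCount y₂.neg F = 0 := by
    intro hm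
    have h := hynegOnce.2.1; rw [exp y₂.neg] at h
    rw [if_pos (Finset.mem_insert_of_mem hm)] at h
    split_ifs at h <;> omega
  have o21 : y₁.neg ∈ insert y₂ C₂ → occCount y₁.neg F = 0 := by
    intro hm
    have h := hynegOnce.1; rw [exp y₁.neg] at h
    rw [if_pos (Finset.mem_insert_of_mem hm)] at h
    split_ifs at h <;> omega
  -- clause normal forms
  have hu13 : insert y₁ (insert y₃ (C₁ ∪ C₃)) = insert y₁ C₁ ∪ insert y₃ C₃ := by
    rw [Finset.insert_union, Finset.union_insert]
  have hu23 : insert y₂ (insert y₃ (C₂ ∪ C₃)) = insert y₂ C₂ ∪ insert y₃ C₃ := by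
    rw [Finset.insert_union, Finset.union_insert]
  have hu14 : insert y₁ (insert y₄ (C₁ ∪ C₄)) = insert y₁ C₁ ∪ insert y₄ C₄ := by
    rw [Finset.insert_union, Finset.union_insert]
  have hu24 : insert y₂ (insert y₄ (C₂ ∪ C₄)) = insert y₂ C₂ ∪ insert y₄ C₄ := by
    rw [Finset.insert_union, Finset.union_insert]
  apply le_antisymm
  · -- maxsat F₁ ≤ maxsat F₂
    apply maxsat_le_of
    intro σ
    have hsplit : litSat σ z ∨ litSat σ z.neg := by
      cases h : σ z.1 <;> cases hz2 : z.2 <;> simp [litSat, Lit.neg, h, hz2]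
    rcases hsplit with hσ | hσ
    · obtain ⟨τ, hτ⟩ :=
        main_side F z y₁ y₂ y₃ y₄ C₁ C₂ C₃ C₄ hy21 hy43 o1 o2 o3 o4 o34 o43 σ hσ
      refine ⟨τ, ?_⟩
      rw [hF₁, hu13, hu23, hu14, hu24]
      exact hτ
    · obtain ⟨τ, hτ⟩ :=
        main_side F z.neg y₃ y₄ y₁ y₂ C₃ C₄ C₁ C₂ hy43 hy21 o3 o4 o1 o2 o12 o21 σ hσ
      rw [neg_neg] at hτ
      have eX : insert z.neg (insert y₃ C₃) ::ₘ insert z.neg (insert y₄ C₄) ::ₘ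
          insert z (insert y₁ C₁) ::ₘ insert z (insert y₂ C₂) ::ₘ F =
          insert z (insert y₁ C₁) ::ₘ insert z (insert y₂ C₂) ::ₘ
          insert z.neg (insert y₃ C₃) ::ₘ insert z.neg (insert y₄ C₄) ::ₘ F :=
        cons4_swap _ _ _ _ F
      rw [eX] at hτ
      have c1 : insert y₃ C₃ ∪ insert y₁ C₁ = insert y₁ C₁ ∪ insert y₃ C₃ := Finset.union_comm _ _
      have c2 : insert y₄ C₄ ∪ insert y₁ C₁ = insert y₁ C₁ ∪ insert y₄ C₄ := Finset.union_comm _ _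
      have c3 : insert y₃ C₃ ∪ insert y₂ C₂ = insert y₂ C₂ ∪ insert y₃ C₃ := Finset.union_comm _ _
      have c4 : insert y₄ C₄ ∪ insert y₂ C₂ = insert y₂ C₂ ∪ insert y₄ C₄ := Finset.union_comm _ _
      rw [c1, c2, c3, c4] at hτ
      have eY : (insert y₁ C₁ ∪ insert y₃ C₃) ::ₘ (insert y₁ C₁ ∪ insert y₄ C₄) ::ₘ
          (insert y₂ C₂ ∪ insert y₃ C₃) ::ₘ (insert y₂ C₂ ∪ insert y₄ C₄) ::ₘ F =
          (insert y₁ C₁ ∪ insert y₃ C₃) ::ₘ (insert y₂ C₂ ∪ insert y₃ C₃) ::ₘ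
          (insert y₁ C₁ ∪ insert y₄ C₄) ::ₘ (insert y₂ C₂ ∪ insert y₄ C₄) ::ₘ F :=
        cons_mid_swap _ _ _ _ F
      rw [eY] at hτ
      refine ⟨τ, ?_⟩
      rw [hF₁, hu13, hu23, hu14, hu24]
      exact hτ
  · -- maxsat F₂ ≤ maxsat F₁
    apply maxsat_le_of
    intro σ
    obtain ⟨τ, hτ⟩ := dir1 F z y₁ y₂ y₃ y₄ C₁ C₂ C₃ C₄ hzF hzC hyz σ
    refine ⟨τ, ?_⟩
    rw [hF₁, hu13, hu23, hu14, hu24]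
    exact hτ
end

section
/- Set-cover correspondence for simplified instances: let F be a CNF formula over variables x_1,...,x_n with m clauses, consisting of the n unit clauses (¬x_1),...,(¬x_n) and m-n non-unit clauses each containing only positive literals. For a set S of variables, let the assignment σ_S set exactly the variables in S to true. Then: (a) there is an optimal assignment (maximizing the number of satisfied clauses) that satisfies all m-n non-unit clauses; and (b) maxsat(F) = m - t_min, where t_min is the minimum size of a set S of variables such that every non-unit clause contains some variable of S (i.e., the minimum set cover of the hypergraph whose hyperedges are the non-unit clauses). -/
open Classical

lemma satCount_add (σ : Var → Bool) (G H : Multiset Clause) :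
    satCount σ (G + H) = satCount σ G + satCount σ H := by
  unfold satCount; rw [Multiset.filter_add, Multiset.card_add]

lemma satCount_units (σ : Var → Bool) (n : ℕ) :
    satCount σ ((Multiset.range n).map (fun i => ({(i, false)} : Clause)))
      = ((Finset.range n).filter (fun i => σ i = false)).card := by
  classical
  unfold satCount
  rw [Multiset.filter_map, Multiset.card_map]
  have h1 : Multiset.filter ((fun C => clauseSat σ C) ∘ (fun i => ({(i,false)}:Clause)))
        (Multiset.range n)
      = Multiset.filter (fun i => σ i = false) (Multiset.range n) := by
    apply Multiset.filter_congr
    intro i _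
    simp [clauseSat, litSat, Function.comp]
  rw [h1]
  rfl

lemma card_units_filter (S : Finset Var) (n : ℕ) (hS : S ⊆ Finset.range n) :
    ((Finset.range n).filter (fun i => decide (i ∈ S) = false)).card = n - S.card := by
  classical
  have : (Finset.range n).filter (fun i => decide (i ∈ S) = false)
      = Finset.range n \ S := by
    ext i; simp [Finset.mem_sdiff]
  rw [this, Finset.card_sdiff_of_subset hS, Finset.card_range]


/-- Set-cover correspondence for simplified instances: `F` consists of the `n`
unit clauses `(¬x_i)` together with `m - n` nonempty clauses of positive literals
on variables below `n`. Then (a) some optimal assignment satisfies all non-unit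
clauses, and (b) `maxsat F = m - t_min`, where `t_min` is the minimum size of a
set of variables hitting every non-unit clause. -/
theorem simplified_setcover_correspondence (n : ℕ) (pos : Multiset Clause)
    (hpos : ∀ C ∈ pos, C.Nonempty ∧ ∀ l ∈ C, l.2 = true ∧ l.1 < n)
    (F : Multiset Clause)
    (hF : F = (Multiset.range n).map (fun i => ({(i, false)} : Clause)) + pos)
    (m : ℕ) (hm : m = Multiset.card F) :
    (∃ σ : Var → Bool, satCount σ F = maxsat F ∧ ∀ C ∈ pos, clauseSat σ C) ∧
    maxsat F =
      m - sInf {t : ℕ | ∃ S : Finset Var, S.card = t ∧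
        ∀ C ∈ pos, ∃ l ∈ C, l.1 ∈ S} := by
  classical
  set T : Set ℕ := {t : ℕ | ∃ S : Finset Var, S.card = t ∧
      ∀ C ∈ pos, ∃ l ∈ C, l.1 ∈ S} with hTdef
  have hTne : T.Nonempty := by
    refine ⟨n, Finset.range n, Finset.card_range n, fun C hC => ?_⟩
    obtain ⟨⟨l, hlC⟩, hl⟩ := hpos C hC
    exact ⟨l, hlC, Finset.mem_range.mpr (hl l hlC).2⟩
  set t0 := sInf T with ht0
  obtain ⟨S1, hS1card, hS1cov⟩ := Nat.sInf_mem hTne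
  set S0 := S1 ∩ Finset.range n with hS0def
  have hS0sub : S0 ⊆ Finset.range n := Finset.inter_subset_right
  have hS0cov : ∀ C ∈ pos, ∃ l ∈ C, l.1 ∈ S0 := by
    intro C hC
    obtain ⟨l, hlC, hlS⟩ := hS1cov C hC
    exact ⟨l, hlC, Finset.mem_inter.mpr
      ⟨hlS, Finset.mem_range.mpr ((hpos C hC).2 l hlC).2⟩⟩
  have hS0card : S0.card = t0 := by
    have h2 : t0 ≤ S0.card := Nat.sInf_le ⟨S0, rfl, hS0cov⟩
    have h3 : S0.card ≤ S1.card := Finset.card_le_card Finset.inter_subset_left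
    omega
  have ht0n : t0 ≤ n := by
    have := Finset.card_le_card hS0sub
    rw [hS0card, Finset.card_range] at this
    exact this
  set σ0 : Var → Bool := fun v => decide (v ∈ S0) with hσ0
  have hσ0pos : ∀ C ∈ pos, clauseSat σ0 C := by
    intro C hC
    obtain ⟨l, hlC, hlS⟩ := hS0cov C hC
    exact ⟨l, hlC, by simp [litSat, ((hpos C hC).2 l hlC).1, hσ0, hlS]⟩
  have hsatσ0 : satCount σ0 F = (n - t0) + Multiset.card pos := by
    rw [hF, satCount_add, satCount_units]
    congr 1
    · rw [← hS0card, ← card_units_filter S0 n hS0sub]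
    · unfold satCount
      rw [Multiset.filter_eq_self.mpr hσ0pos]
  have hub : ∀ σ : Var → Bool, satCount σ F ≤ (n - t0) + Multiset.card pos := by
    intro σ
    set Sσ := (Finset.range n).filter (fun i => σ i = true) with hSσ
    have hunit : ((Finset.range n).filter (fun i => σ i = false)).card
        = n - Sσ.card := by
      have hadd := Finset.card_filter_add_card_filter_not
        (s := Finset.range n) (p := fun i => σ i = true)
      have heq : (Finset.range n).filter (fun i => ¬ (σ i = true))
          = (Finset.range n).filter (fun i => σ i = false) := by
        apply Finset.filter_congr; intro i _; simp
      rw [heq, Finset.card_range, ← hSσ] at hadd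
      clear_value Sσ
      omega
    set pick : Clause → Var := fun C => if h : C.Nonempty then h.choose.1 else 0
      with hpick
    set U := (pos.filter (fun C => ¬ clauseSat σ C)).toFinset with hU
    set S' := Sσ ∪ U.image pick with hS'
    have hS'cov : ∀ C ∈ pos, ∃ l ∈ C, l.1 ∈ S' := by
      intro C hC
      by_cases h : clauseSat σ C
      · obtain ⟨l, hlC, hsat⟩ := h
        refine ⟨l, hlC, Finset.mem_union_left _ ?_⟩
        have hl2 := (hpos C hC).2 l hlC
        have : σ l.1 = true := by rw [litSat] at hsat; rw [hsat, hl2.1]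
        simp [hSσ, Finset.mem_filter, Finset.mem_range, hl2.2, this]
      · have hCU : C ∈ U := by
          simp [hU, Multiset.mem_toFinset, Multiset.mem_filter, hC, h]
        have hne := (hpos C hC).1
        refine ⟨hne.choose, hne.choose_spec, Finset.mem_union_right _
          (Finset.mem_image.mpr ⟨C, hCU, ?_⟩)⟩
        simp [hpick, dif_pos hne]
    have hUcard : U.card ≤ Multiset.card pos - satCount σ pos := by
      have h1 : U.card ≤ Multiset.card (pos.filter (fun C => ¬ clauseSat σ C)) :=
        Multiset.toFinset_card_le _
      have h2 : Multiset.card (pos.filter (fun C => clauseSat σ C))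
          + Multiset.card (pos.filter (fun C => ¬ clauseSat σ C))
          = Multiset.card pos := by
        rw [← Multiset.card_add, Multiset.filter_add_not]
      unfold satCount
      omega
    have ht0le : t0 ≤ Sσ.card + (Multiset.card pos - satCount σ pos) := by
      have h1 : t0 ≤ S'.card := Nat.sInf_le ⟨S', rfl, hS'cov⟩
      have h2 : S'.card ≤ Sσ.card + U.card :=
        (Finset.card_union_le _ _).trans
          (by exact Nat.add_le_add_left (Finset.card_image_le) _)
      omega
    have hsp : satCount σ pos ≤ Multiset.card pos := Multiset.card_le_card (Multiset.filter_le _ _)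
    have hSσn : Sσ.card ≤ n := by
      have := Finset.card_filter_le (Finset.range n) (fun i => σ i = true)
      rwa [Finset.card_range] at this
    rw [hF, satCount_add, satCount_units, hunit]
    clear_value t0 Sσ
    omega
  have hmax : maxsat F = (n - t0) + Multiset.card pos := by
    have hg : IsGreatest (Set.range fun σ => satCount σ F)
        ((n - t0) + Multiset.card pos) :=
      ⟨⟨σ0, hsatσ0⟩, by rintro x ⟨σ, rfl⟩; exact hub σ⟩
    exact hg.csSup_eq
  have hmcard : m = n + Multiset.card pos := by
    rw [hm, hF, Multiset.card_add, Multiset.card_map, Multiset.card_range]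
  refine ⟨⟨σ0, by rw [hsatσ0, hmax], hσ0pos⟩, ?_⟩
  rw [hmax]
  omega
end

section
/- Correctness of branching on a singleton in a 3-clause (B-Rule 14): let F be a CNF formula containing a clause (z_1 ∨ z_2 ∨ z_3) where the literal ¬z_3 occurs exactly once in F (in a unit clause). If there is an assignment satisfying at least k clauses of F that assigns z_1 = z_2 = z_3 = 0, then there is also an assignment satisfying at least k clauses that assigns z_1 = z_2 = 0 and z_3 = 1. Consequently, maxsat(F) ≥ k iff at least one of the three restricted problems — (i) z_1 = 1, (ii) z_1 = 0, z_2 = 1, (iii) z_1 = z_2 = 0, z_3 = 1 — admits an assignment satisfying at least k clauses. -/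
open Classical

lemma satCount_mono (σ σ' : Var → Bool) (G : Multiset Clause)
    (h : ∀ C ∈ G, clauseSat σ C → clauseSat σ' C) :
    satCount σ G ≤ satCount σ' G := by
  induction G using Multiset.induction_on with
  | empty => simp [satCount]
  | cons a s ih =>
    rw [satCount_cons, satCount_cons]
    have hs := ih (fun C hC => h C (Multiset.mem_cons_of_mem hC))
    have hh : (if clauseSat σ a then 1 else 0) ≤ (if clauseSat σ' a then (1:ℕ) else 0) := by
      by_cases hca : clauseSat σ a
      · rw [if_pos hca, if_pos (h a (Multiset.mem_cons_self a s) hca)]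
      · rw [if_neg hca]; split <;> omega
    omega

/-- Correctness of branching on a singleton in a 3-clause (B-Rule 14): if `F`
contains the clause `(z₁ ∨ z₂ ∨ z₃)`, the literal `¬z₃` occurs exactly once in
`F`, namely as the unit clause `(¬z₃)`, and `z₁, z₂, z₃` are literals of three
distinct variables, then an assignment with `z₁ = z₂ = z₃ = 0` satisfying `k`
clauses can be replaced by one with `z₁ = z₂ = 0`, `z₃ = 1`; consequently the
three-way branching is exhaustive. -/
theorem brule14_branching_correct (F : Multiset Clause) (z₁ z₂ z₃ : Lit) (k : ℕ)
    (hdist : z₁.1 ≠ z₂.1 ∧ z₁.1 ≠ z₃.1 ∧ z₂.1 ≠ z₃.1)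
    (hclause : ({z₁, z₂, z₃} : Clause) ∈ F)
    (hunit : ({z₃.neg} : Clause) ∈ F)
    (honce : occCount z₃.neg F = 1) :
    ((∃ σ, k ≤ satCount σ F ∧ ¬ litSat σ z₁ ∧ ¬ litSat σ z₂ ∧ ¬ litSat σ z₃) →
      ∃ σ, k ≤ satCount σ F ∧ ¬ litSat σ z₁ ∧ ¬ litSat σ z₂ ∧ litSat σ z₃) ∧
    ((∃ σ, k ≤ satCount σ F) ↔
      ((∃ σ, k ≤ satCount σ F ∧ litSat σ z₁) ∨
       (∃ σ, k ≤ satCount σ F ∧ ¬ litSat σ z₁ ∧ litSat σ z₂) ∨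
       (∃ σ, k ≤ satCount σ F ∧ ¬ litSat σ z₁ ∧ ¬ litSat σ z₂ ∧ litSat σ z₃))) := by
  obtain ⟨hd12, hd13, hd23⟩ := hdist
  have key : ∀ σ, k ≤ satCount σ F → ¬ litSat σ z₁ → ¬ litSat σ z₂ → ¬ litSat σ z₃ →
      ∃ σ', k ≤ satCount σ' F ∧ ¬ litSat σ' z₁ ∧ ¬ litSat σ' z₂ ∧ litSat σ' z₃ := by
    intro σ hk h1 h2 h3
    obtain ⟨G, rfl⟩ := Multiset.exists_cons_of_mem hunit
    have h3cl : ({z₁, z₂, z₃} : Clause) ∈ G := by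
      rcases Multiset.mem_cons.1 hclause with h | h
      · exfalso
        have hz : z₁ ∈ ({z₃.neg} : Clause) := h ▸ (by simp)
        rw [Finset.mem_singleton] at hz
        have := congrArg Prod.fst hz
        simp only [Lit.neg] at this
        exact hd13 this
      · exact h
    obtain ⟨H, rfl⟩ := Multiset.exists_cons_of_mem h3cl
    -- no clause of the rest contains z₃.neg
    have hno : ∀ C ∈ (({z₁, z₂, z₃} : Clause) ::ₘ H), z₃.neg ∉ C := by
      intro C hC hmem
      have h1le : (1 : ℕ) + 1 ≤ occCount z₃.neg (({z₃.neg} : Clause) ::ₘ ({z₁, z₂, z₃} : Clause) ::ₘ H) := by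
        simp only [occCount]
        rw [Multiset.filter_cons_of_pos _ (by simp)]
        rw [Multiset.card_cons]
        have : C ∈ Multiset.filter (fun C => z₃.neg ∈ C) ((({z₁, z₂, z₃} : Clause)) ::ₘ H) :=
          Multiset.mem_filter.2 ⟨hC, hmem⟩
        have := Multiset.card_pos_iff_exists_mem.2 ⟨C, this⟩
        omega
      rw [honce] at h1le
      omega
    set σ' : Var → Bool := fun v => if v = z₃.1 then z₃.2 else σ v with hσ'
    have hσ'3 : σ' z₃.1 = z₃.2 := by simp [hσ']
    have hσ'other : ∀ v, v ≠ z₃.1 → σ' v = σ v := by intro v hv; simp [hσ', hv]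
    have hpres : ∀ C, z₃.neg ∉ C → clauseSat σ C → clauseSat σ' C := by
      rintro C hC ⟨l, hlC, hl⟩
      by_cases hv : l.1 = z₃.1
      · exfalso
        have hb : l.2 ≠ z₃.2 := by
          intro hb
          apply h3
          unfold litSat at hl ⊢
          rw [← hb, ← hv]; exact hl
        have : l = z₃.neg := by
          have : l.2 = !z₃.2 := by
            cases hb2 : l.2 <;> cases hb3 : z₃.2 <;> simp_all
          exact Prod.ext hv this
        exact hC (this ▸ hlC)
      · exact ⟨l, hlC, by unfold litSat at hl ⊢; rw [hσ'other _ hv]; exact hl⟩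
    refine ⟨σ', ?_, ?_, ?_, hσ'3⟩
    · -- count inequality
      have hHmono : satCount σ H ≤ satCount σ' H :=
        satCount_mono σ σ' H (fun C hC => hpres C (hno C (Multiset.mem_cons_of_mem hC)))
      have hnot3 : ¬ clauseSat σ ({z₁, z₂, z₃} : Clause) := by
        rintro ⟨l, hl, hsat⟩
        simp only [Finset.mem_insert, Finset.mem_singleton] at hl
        rcases hl with rfl | rfl | rfl
        · exact h1 hsat
        · exact h2 hsat
        · exact h3 hsat
      have hyes3 : clauseSat σ' ({z₁, z₂, z₃} : Clause) :=
        ⟨z₃, by simp, hσ'3⟩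
      rw [satCount_cons, satCount_cons] at hk ⊢
      rw [if_neg hnot3] at hk
      rw [if_pos hyes3]
      have hle1 : (if clauseSat σ ({z₃.neg} : Clause) then 1 else 0) ≤ 1 := by
        split <;> omega
      omega
    · intro h; apply h1
      unfold litSat at h ⊢; rw [← hσ'other z₁.1 hd13]; exact h
    · intro h; apply h2
      unfold litSat at h ⊢; rw [← hσ'other z₂.1 hd23]; exact h
  constructor
  · rintro ⟨σ, hk, h1, h2, h3⟩
    exact key σ hk h1 h2 h3
  · constructor
    · rintro ⟨σ, hk⟩
      by_cases h1 : litSat σ z₁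
      · exact Or.inl ⟨σ, hk, h1⟩
      by_cases h2 : litSat σ z₂
      · exact Or.inr (Or.inl ⟨σ, hk, h1, h2⟩)
      by_cases h3 : litSat σ z₃
      · exact Or.inr (Or.inr ⟨σ, hk, h1, h2, h3⟩)
      · exact Or.inr (Or.inr (key σ hk h1 h2 h3))
    · rintro (⟨σ, hk, -⟩ | ⟨σ, hk, -⟩ | ⟨σ, hk, -⟩) <;> exact ⟨σ, hk⟩
end
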